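/- Over any binary alphabet {a,b}, the set of factors of infinite smooth words equals the set of f-smooth words: L(C^∞) = C_f^∞. In particular the factor complexities agree: p_{C^∞}(n) = p_{C_f^∞}(n) for all n. -/

import Mathlib

/-!
A word over `{a, b}` is determined by its first letter and its run lengths, and an infinite word
`x` with derivative `y` is `expand a b y (x 0)`. A factor of `expand a b y c` is the `runWord` of a
`Window` of `y`: its inner run lengths are consecutive letters of `y`, its first and last ones are
truncations of letters of `y`. On such a word `D_f` cuts the two boundary runs to `ε` or to `b`
exactly as `y` allows, so `D_f` of a factor of `x` is a factor of `y`; conversely, a word passing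
the test `Cf1` whose derivative occurs in `y` has its run lengths in a window of `y`, hence occurs
in an expansion of `y`. Since `D_f` shortens nonempty words, induction on the length gives both
inclusions. The base case of the second one needs one smooth word: the generalized Kolakoski word,
which is its own derivative.
-/

namespace SmoothWords

/-- Complement of a letter over the alphabet `{a, b}`. -/
def flip (a b c : ℕ) : ℕ := if c = a then b else a

/-- Run-length encoding of a finite word: list of (letter, exponent) pairs. -/
def runs : List ℕ → List (ℕ × ℕ)
  | [] => []
  | c :: t =>
    match runs t with
    | [] => [(c, 1)]
    | (d, k) :: r => if c = d then (c, k + 1) :: r else (c, 1) :: (d, k) :: r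

/-- The exponents of the canonical run-length factorization. -/
def exps (u : List ℕ) : List ℕ := (runs u).map Prod.snd

/-- Boundary cut used by the finite derivatives. -/
def cut (a b p : ℕ) : List ℕ := if p ≤ a then [] else [b]

/-- The finite derivative `D_f`. -/
def Df (a b : ℕ) (u : List ℕ) : List ℕ :=
  match exps u with
  | [] => []
  | [p] => cut a b p
  | p :: q :: rest =>
      cut a b p ++ (q :: rest).dropLast ++ cut a b ((q :: rest).getLast (List.cons_ne_nil _ _))

/-- `u` is f-derivable: letters in `{a,b}`, inner run exponents in `{a,b}`,
boundary run exponents in `[1, b]`. -/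
def Cf1 (a b : ℕ) (u : List ℕ) : Prop :=
  (∀ c ∈ u, c = a ∨ c = b) ∧
  (∀ p ∈ exps u, p ≤ b) ∧
  (∀ p ∈ ((exps u).drop 1).dropLast, p = a ∨ p = b)

/-- `u` is f-smooth: all iterated finite derivatives are f-derivable
(equivalently, some iterate is `ε`). -/
def FSmooth (a b : ℕ) (u : List ℕ) : Prop := ∀ n, Cf1 a b ((Df a b)^[n] u)

/-- The r-derivative `D_r`: keeps all exponents but cuts the last one. -/
def Dr (a b : ℕ) (u : List ℕ) : List ℕ :=
  match exps u with
  | [] => []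
  | p :: rest =>
      (p :: rest).dropLast ++ cut a b ((p :: rest).getLast (List.cons_ne_nil _ _))

/-- `u` is r-derivable. -/
def Cr1 (a b : ℕ) (u : List ℕ) : Prop :=
  (∀ c ∈ u, c = a ∨ c = b) ∧
  (∀ p ∈ exps u, p ≤ b) ∧
  (∀ p ∈ (exps u).dropLast, p = a ∨ p = b)

/-- `u` is r-smooth. -/
def RSmooth (a b : ℕ) (u : List ℕ) : Prop := ∀ n, Cr1 a b ((Dr a b)^[n] u)

/-- `y` is the derivative of the infinite word `x`: `x = x₀^{y₀} x̄₀^{y₁} x₀^{y₂} ⋯`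
with all `y i ∈ {a, b}` (in particular `x` is derivable). -/
def DerivesTo (a b : ℕ) (x y : ℕ → ℕ) : Prop :=
  (∀ i, y i = a ∨ y i = b) ∧
  ∃ S : ℕ → ℕ, S 0 = 0 ∧ (∀ k, S (k + 1) = S k + y k) ∧
    ∀ k i, S k ≤ i → i < S (k + 1) → x i = (flip a b)^[k] (x 0)

/-- An infinite word over `{a,b}` is smooth if it is infinitely derivable. -/
def Smooth (a b : ℕ) (x : ℕ → ℕ) : Prop :=
  (∀ i, x i = a ∨ x i = b) ∧
  ∃ X : ℕ → ℕ → ℕ, X 0 = x ∧ ∀ n, DerivesTo a b (X n) (X (n + 1))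

/-- Auxiliary for the f-primitives: alternate blocks with given exponents,
ending with a block of exponent `a`. -/
def pfAux (a b : ℕ) : ℕ → List ℕ → List ℕ
  | c, [] => List.replicate a c
  | c, p :: t => List.replicate p c ++ pfAux a b (flip a b c) t

/-- The f-primitive `P_{f,c}`. -/
def Pf (a b c : ℕ) (u : List ℕ) : List ℕ :=
  if c = a then List.replicate a a ++ pfAux a b b u
  else (List.replicate a a ++ pfAux a b b u).map (flip a b)

/-- `u` is a bispecial f-smooth word. -/
def Bispecial (a b : ℕ) (u : List ℕ) : Prop :=
  FSmooth a b u ∧ FSmooth a b (a :: u) ∧ FSmooth a b (b :: u) ∧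
    FSmooth a b (u ++ [a]) ∧ FSmooth a b (u ++ [b])

open Classical in
/-- The multiplicity `m(u) = |{aua,aub,bua,bub} ∩ C_f^∞| - 3`. -/
noncomputable def mult (a b : ℕ) (u : List ℕ) : ℤ :=
  (if FSmooth a b (a :: u ++ [a]) then 1 else 0) +
  (if FSmooth a b (a :: u ++ [b]) then 1 else 0) +
  (if FSmooth a b (b :: u ++ [a]) then 1 else 0) +
  (if FSmooth a b (b :: u ++ [b]) then 1 else 0) - 3

/-- The vertex of the tree `T` indexed by the path `s` from the root `ε`
(`false` = child by `P_{f,a}`, `true` = child by `P_{f,b}`). -/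
def node (a b : ℕ) : List Bool → List ℕ
  | [] => []
  | c :: s => Pf a b (if c then b else a) (node a b s)

/-- Total length `f(i) = ∑_{u ∈ T_i} |u|` of generation `i` of `T`. -/
def totalLen (a b i : ℕ) : ℕ :=
  ∑ s : Fin i → Bool, (node a b (List.ofFn s)).length

/-- Generation `i` of the tree `T`, as a finite set of words. -/
def genSet (a b i : ℕ) : Finset (List ℕ) :=
  (Finset.univ : Finset (Fin i → Bool)).image fun s => node a b (List.ofFn s)

/-- `b_i(n) = |T_i ∩ A^n|`. -/
def bfun (a b i n : ℕ) : ℕ := ((genSet a b i).filter fun u => u.length = n).card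

/-- `s_i(n) = ∑_{m<n} b_i(m)`. -/
def sfun (a b i n : ℕ) : ℕ := ∑ m ∈ Finset.range n, bfun a b i m

/-- `p_i(n) = ∑_{m<n} s_i(m)`. -/
def pfun (a b i n : ℕ) : ℕ := ∑ m ∈ Finset.range n, sfun a b i m

/-- `p(n) = ∑_i p_i(n)`. -/
noncomputable def pTot (a b n : ℕ) : ℝ := ∑' i : ℕ, (pfun a b i n : ℝ)

/-- `l_i`, the minimal length of a word of generation `i` of `T`. -/
noncomputable def li (a b i : ℕ) : ℕ :=
  sInf {m | ∃ s : Fin i → Bool, (node a b (List.ofFn s)).length = m}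

/-- `u` is a factor of the infinite word `x`. -/
def FactorOf (u : List ℕ) (x : ℕ → ℕ) : Prop :=
  ∃ i, u = (List.range u.length).map fun j => x (i + j)

section Letters

variable {a b c d : ℕ}

lemma one_le_of_eq_or (ha : 1 ≤ a) (hab : a ≤ b) (hc : c = a ∨ c = b) : 1 ≤ c := by omega

lemma flip_eq_or (c : ℕ) : flip a b c = a ∨ flip a b c = b := by
  unfold flip; split <;> simp

lemma flip_ne_self (hab : a ≠ b) (hc : c = a ∨ c = b) : flip a b c ≠ c := by
  rcases hc with rfl | rfl <;> simp [flip, hab, Ne.symm hab]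

lemma eq_flip_of_ne (hab : a ≠ b) (hc : c = a ∨ c = b) (hd : d = a ∨ d = b) (h : c ≠ d) :
    d = flip a b c := by
  rcases hc with rfl | rfl <;> rcases hd with rfl | rfl <;> simp_all [flip, Ne.symm hab]

lemma flip_flip (hab : a ≠ b) (hc : c = a ∨ c = b) : flip a b (flip a b c) = c := by
  rcases hc with rfl | rfl <;> simp [flip, Ne.symm hab]

lemma iterate_flip_eq_or (hc : c = a ∨ c = b) :
    ∀ k, (flip a b)^[k] c = a ∨ (flip a b)^[k] c = b
  | 0 => hc
  | k + 1 => by rw [Function.iterate_succ_apply']; exact flip_eq_or _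

lemma iterate_flip_iterate_flip (hab : a ≠ b) (hc : c = a ∨ c = b) (k : ℕ) :
    (flip a b)^[k] ((flip a b)^[k] c) = c := by
  rw [← Function.iterate_add_apply, ← two_mul, Function.iterate_mul]
  exact Function.iterate_fixed (flip_flip hab hc) k

end Letters

section Segment

def segment (x : ℕ → ℕ) (i n : ℕ) : List ℕ := (List.range n).map fun j => x (i + j)

variable {x : ℕ → ℕ} {i m n c : ℕ}

@[simp] lemma length_segment : (segment x i n).length = n := by simp [segment]

@[simp] lemma segment_zero : segment x i 0 = [] := rfl

lemma segment_add : segment x i (m + n) = segment x i m ++ segment x (i + m) n := by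
  simp [segment, List.range_add, Nat.add_assoc]

lemma segment_succ : segment x i (n + 1) = x i :: segment x (i + 1) n := by
  simp [segment, List.range_succ_eq_map, Nat.add_assoc, Nat.add_comm 1]

lemma segment_one : segment x i 1 = [x i] := rfl

lemma segment_eq_replicate (h : ∀ j < n, x (i + j) = c) :
    segment x i n = List.replicate n c := by
  refine List.eq_replicate_iff.2 ⟨length_segment, fun d hd => ?_⟩
  obtain ⟨j, hj, rfl⟩ := List.mem_map.1 hd
  exact h j (List.mem_range.1 hj)

lemma forall_mem_segment {P : ℕ → Prop} (hx : ∀ k, P (x k)) :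
    ∀ d ∈ segment x i n, P d := by
  intro d hd
  obtain ⟨j, -, rfl⟩ := List.mem_map.1 hd
  exact hx _

lemma factorOf_segment : FactorOf (segment x i n) x := ⟨i, by rw [length_segment]; rfl⟩

end Segment

section RunWord

def runWord (a b : ℕ) : ℕ → List ℕ → List ℕ
  | _, [] => []
  | c, e :: es => List.replicate e c ++ runWord a b (flip a b c) es

variable {a b c : ℕ}

@[simp] lemma runWord_nil : runWord a b c [] = [] := rfl

lemma runWord_cons (e : ℕ) (es : List ℕ) :
    runWord a b c (e :: es) = List.replicate e c ++ runWord a b (flip a b c) es := rfl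

lemma runWord_append (es fs : List ℕ) :
    runWord a b c (es ++ fs) = runWord a b c es ++ runWord a b ((flip a b)^[es.length] c) fs := by
  induction es generalizing c with
  | nil => rfl
  | cons e es ih => simp [runWord_cons, ih]

@[simp] lemma length_runWord (es : List ℕ) : (runWord a b c es).length = es.sum := by
  induction es generalizing c with
  | nil => rfl
  | cons e es ih => simp [runWord_cons, ih]

lemma eq_or_of_mem_runWord (hc : c = a ∨ c = b) {es : List ℕ} {d : ℕ}
    (hd : d ∈ runWord a b c es) : d = a ∨ d = b := by
  induction es generalizing c with
  | nil => simp at hd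
  | cons e es ih =>
      rcases List.mem_append.1 hd with hd | hd
      · rw [(List.mem_replicate.1 hd).2]; exact hc
      · exact ih (flip_eq_or c) hd

end RunWord

section Exps

variable {a b c : ℕ} {t u : List ℕ}

lemma runs_cons : runs (c :: t) = match runs t with
      | [] => [(c, 1)]
      | (d, k) :: r => if c = d then (c, k + 1) :: r else (c, 1) :: (d, k) :: r := rfl

lemma exists_runs_cons : ∃ k r, runs (c :: t) = (c, k) :: r := by
  rw [runs_cons]
  rcases runs t with _ | ⟨⟨d, k⟩, r⟩
  · exact ⟨1, [], rfl⟩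
  · by_cases hc : c = d
    · exact ⟨k + 1, r, by simp [hc]⟩
    · exact ⟨1, (d, k) :: r, by simp [hc]⟩

lemma exps_ne_nil (hu : u ≠ []) : exps u ≠ [] := by
  obtain ⟨c, t, rfl⟩ := List.exists_cons_of_ne_nil hu
  obtain ⟨k, r, h⟩ := exists_runs_cons (c := c) (t := t)
  simp [exps, h]

lemma one_le_of_mem_runs {p : ℕ × ℕ} (hp : p ∈ runs u) : 1 ≤ p.2 := by
  induction u generalizing p with
  | nil => simp [runs] at hp
  | cons c t ih =>
      rw [runs_cons] at hp
      rcases h : runs t with _ | ⟨⟨d, k⟩, r⟩ <;> rw [h] at hp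
      · simp_all
      · have hk : 1 ≤ k := ih (p := (d, k)) (by simp [h])
        have hr : ∀ q ∈ r, 1 ≤ q.2 := fun q hq => ih (by simp [h, hq])
        dsimp only at hp
        split_ifs at hp <;> aesop

lemma one_le_of_mem_exps {p : ℕ} (hp : p ∈ exps u) : 1 ≤ p := by
  obtain ⟨q, hq, rfl⟩ := List.mem_map.1 hp
  exact one_le_of_mem_runs hq

lemma sum_exps (u : List ℕ) : (exps u).sum = u.length := by
  induction u with
  | nil => rfl
  | cons c t ih =>
      rw [exps, runs_cons]
      rw [exps] at ih
      rcases h : runs t with _ | ⟨⟨d, k⟩, r⟩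
      · rw [h] at ih
        simp_all [Nat.add_comm]
      · rw [h] at ih
        dsimp only
        split_ifs <;> simp_all <;> omega

lemma runs_replicate_append {p : ℕ} (hp : 1 ≤ p) (hw : ∀ d ∈ u.head?, d ≠ c) :
    runs (List.replicate p c ++ u) = (c, p) :: runs u := by
  induction p, hp using Nat.le_induction with
  | base =>
      rw [List.replicate_one, List.singleton_append, runs_cons]
      rcases u with _ | ⟨d, t⟩
      · rfl
      · obtain ⟨k, r, h⟩ := exists_runs_cons (c := d) (t := t)
        simp [h, Ne.symm (hw d rfl)]
  | succ p _ ih => rw [List.replicate_succ, List.cons_append, runs_cons, ih]; simp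

lemma exps_runWord (hab : a ≠ b) (hc : c = a ∨ c = b) {es : List ℕ}
    (hes : ∀ e ∈ es, 1 ≤ e) : exps (runWord a b c es) = es := by
  induction es generalizing c with
  | nil => rfl
  | cons e es ih =>
      have hw : ∀ d ∈ (runWord a b (flip a b c) es).head?, d ≠ c := by
        intro d hd
        rcases es with _ | ⟨e', es⟩
        · simp at hd
        · obtain ⟨n, hn⟩ := Nat.exists_eq_add_of_le' (hes e' (by simp))
          simp only [runWord_cons, hn, List.replicate_succ, List.cons_append,
            List.head?_cons, Option.mem_def, Option.some.injEq] at hd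
          exact hd ▸ flip_ne_self hab hc
      rw [runWord_cons, exps, runs_replicate_append (hes e (by simp)) hw, List.map_cons, ← exps,
        ih (flip_eq_or c) fun x hx => hes x (by simp [hx])]

lemma eq_runWord_exps (hab : a ≠ b) (hu : ∀ d ∈ c :: t, d = a ∨ d = b) :
    c :: t = runWord a b c (exps (c :: t)) := by
  induction t generalizing c with
  | nil => rfl
  | cons d t ih =>
      have hc : c = a ∨ c = b := hu c (by simp)
      have htail := ih fun x hx => hu x (List.mem_cons_of_mem _ hx)
      obtain ⟨k, r, hr⟩ := exists_runs_cons (c := d) (t := t)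
      rw [exps, hr] at htail
      by_cases hcd : c = d
      · subst hcd
        rw [exps, runs_cons, hr]
        simp only [if_true, List.map_cons, runWord_cons, List.replicate_succ,
          List.cons_append] at htail ⊢
        rw [← htail]
      · have hfd : d = flip a b c := eq_flip_of_ne hab hc (hu d (by simp)) hcd
        rw [exps, runs_cons, hr]
        simp only [hcd, if_false, List.map_cons, runWord_cons, List.replicate_one,
          List.singleton_append] at htail ⊢
        rw [← hfd, ← htail]

end Exps

section Derivative

variable {a b p e el : ℕ} {u mid : List ℕ}

lemma cut_of_le (h : p ≤ a) : cut a b p = [] := if_pos h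

lemma cut_of_lt (h : a < p) : cut a b p = [b] := if_neg (Nat.not_le.2 h)

lemma length_cut_le_one : (cut a b p).length ≤ 1 := by
  unfold cut; split <;> simp

lemma length_cut_lt (ha : 1 ≤ a) (hp : 1 ≤ p) : (cut a b p).length < p := by
  unfold cut; split <;> simp <;> omega

lemma Df_of_exps_eq_singleton (h : exps u = [p]) : Df a b u = cut a b p := by
  unfold Df; rw [h]

lemma Df_of_exps_eq_cons_append (h : exps u = e :: (mid ++ [el])) :
    Df a b u = cut a b e ++ mid ++ cut a b el := by
  obtain ⟨q, rest, hqr⟩ := List.exists_cons_of_ne_nil (List.concat_ne_nil el mid)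
  unfold Df
  rw [h, hqr]
  dsimp only
  simp [← hqr]

lemma length_Df_lt (ha : 1 ≤ a) (hu : u ≠ []) : (Df a b u).length < u.length := by
  obtain ⟨e, rest, hes⟩ := List.exists_cons_of_ne_nil (exps_ne_nil hu)
  have hpos : ∀ p ∈ exps u, 1 ≤ p := fun p => one_le_of_mem_exps
  rw [← sum_exps u, hes]
  rw [hes] at hpos
  rcases List.eq_nil_or_concat' rest with rfl | ⟨mid, el, rfl⟩
  · rw [Df_of_exps_eq_singleton hes]
    simpa using length_cut_lt (b := b) ha (hpos e (by simp))
  · rw [Df_of_exps_eq_cons_append hes]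
    have h1 := length_cut_lt (b := b) ha (hpos e (by simp))
    have h2 := length_cut_lt (b := b) ha (hpos el (by simp))
    have h3 := mid.length_le_sum_of_one_le fun p hp => hpos p (by simp [hp])
    simp only [List.length_append, List.sum_cons, List.sum_append]
    omega

lemma fsmooth_nil : FSmooth a b [] := by
  intro n
  rw [Function.iterate_fixed (show Df a b [] = [] from rfl)]
  exact ⟨by simp, by simp [exps, runs], by simp [exps, runs]⟩

lemma fsmooth_iff : FSmooth a b u ↔ Cf1 a b u ∧ FSmooth a b (Df a b u) :=
  ⟨fun h => ⟨h 0, fun n => h (n + 1)⟩, fun ⟨h0, h⟩ n => n.casesOn h0 h⟩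

end Derivative

section Expand

def runStart (y : ℕ → ℕ) : ℕ → ℕ
  | 0 => 0
  | k + 1 => runStart y k + y k

def runIndex (y : ℕ → ℕ) (i : ℕ) : ℕ := Nat.findGreatest (fun k => runStart y k ≤ i) i

/-- The infinite word `c^{y 0} c̄^{y 1} c^{y 2} ⋯` whose derivative is `y`. -/
def expand (a b : ℕ) (y : ℕ → ℕ) (c i : ℕ) : ℕ := (flip a b)^[runIndex y i] c

variable {a b c i k m n : ℕ} {x y : ℕ → ℕ}

lemma runStart_succ : runStart y (k + 1) = runStart y k + y k := rfl

lemma runStart_add (k m : ℕ) : runStart y (k + m) = runStart y k + (segment y k m).sum := by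
  induction m with
  | zero => simp
  | succ m ih =>
      rw [← Nat.add_assoc, runStart_succ, ih, segment_add, segment_one]
      simp [Nat.add_assoc]

lemma runStart_strictMono (hy : ∀ k, 1 ≤ y k) : StrictMono (runStart y) :=
  strictMono_nat_of_lt_succ fun k => by have := hy k; rw [runStart_succ]; omega

lemma le_runStart (hy : ∀ k, 1 ≤ y k) (k : ℕ) : k ≤ runStart y k :=
  (runStart_strictMono hy).id_le k

lemma runIndex_spec (hy : ∀ k, 1 ≤ y k) (i : ℕ) :
    runStart y (runIndex y i) ≤ i ∧ i < runStart y (runIndex y i + 1) := by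
  refine ⟨Nat.findGreatest_spec (P := (runStart y · ≤ i)) (Nat.zero_le i) (Nat.zero_le i),
    not_le.1 fun h => ?_⟩
  exact Nat.findGreatest_is_greatest (Nat.lt_succ_self _) ((le_runStart hy _).trans h) h

lemma runIndex_eq (hy : ∀ k, 1 ≤ y k) (h₁ : runStart y k ≤ i)
    (h₂ : i < runStart y (k + 1)) : runIndex y i = k := by
  obtain ⟨h₁', h₂'⟩ := runIndex_spec hy i
  have hmono := (runStart_strictMono hy).monotone
  by_contra hne
  rcases Nat.lt_or_gt_of_ne hne with hlt | hlt
  · exact absurd ((hmono hlt).trans h₁) (not_le.2 h₂')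
  · exact absurd ((hmono hlt).trans h₁') (not_le.2 h₂)

lemma expand_of_mem_run (hy : ∀ k, 1 ≤ y k) (h₁ : runStart y k ≤ i)
    (h₂ : i < runStart y (k + 1)) : expand a b y c i = (flip a b)^[k] c := by
  rw [expand, runIndex_eq hy h₁ h₂]

lemma expand_zero (hy : ∀ k, 1 ≤ y k) : expand a b y c 0 = c :=
  expand_of_mem_run (k := 0) hy le_rfl (Nat.lt_of_lt_of_le (hy 0) (Nat.le_add_left _ _))

lemma derivesTo_expand (hy : ∀ k, y k = a ∨ y k = b) (hy₁ : ∀ k, 1 ≤ y k) :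
    DerivesTo a b (expand a b y c) y :=
  ⟨hy, runStart y, rfl, fun _ => rfl, fun _ _ h₁ h₂ => by
    rw [expand_zero hy₁, expand_of_mem_run hy₁ h₁ h₂]⟩

lemma DerivesTo.eq_expand (ha : 1 ≤ a) (hab : a ≤ b) (h : DerivesTo a b x y) :
    x = expand a b y (x 0) := by
  obtain ⟨hy, S, hS₀, hS, hx⟩ := h
  have hy₁ k := one_le_of_eq_or ha hab (hy k)
  have hSr : S = runStart y := funext fun k => by
    induction k with
    | zero => exact hS₀
    | succ k ih => rw [hS, ih, runStart_succ]
  subst hSr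
  funext i
  exact hx _ i (runIndex_spec hy₁ i).1 (runIndex_spec hy₁ i).2

lemma Smooth.exists_derivative (ha : 1 ≤ a) (hab : a ≤ b) (hx : Smooth a b x) :
    ∃ y, Smooth a b y ∧ x = expand a b y (x 0) := by
  obtain ⟨-, X, rfl, hX⟩ := hx
  exact ⟨X 1, ⟨(hX 0).1, fun n => X (n + 1), rfl, fun n => hX (n + 1)⟩,
    (hX 0).eq_expand ha hab⟩

lemma smooth_expand (ha : 1 ≤ a) (hab : a ≤ b) (hc : c = a ∨ c = b) (hy : Smooth a b y) :
    Smooth a b (expand a b y c) := by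
  obtain ⟨hy, X, rfl, hX⟩ := hy
  refine ⟨fun i => iterate_flip_eq_or hc _, fun n => n.casesOn (expand a b (X 0) c) X, rfl, ?_⟩
  rintro (_ | n)
  · exact derivesTo_expand hy fun k => one_le_of_eq_or ha hab (hy k)
  · exact hX n

lemma segment_expand_of_add_le (hy : ∀ k, 1 ≤ y k) {p : ℕ} (h : p + n ≤ y k) :
    segment (expand a b y c) (runStart y k + p) n = List.replicate n ((flip a b)^[k] c) :=
  segment_eq_replicate fun j hj =>
    expand_of_mem_run hy (by omega) (by rw [runStart_succ]; omega)

lemma segment_expand_runStart (hy : ∀ k, 1 ≤ y k) (k m : ℕ) :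
    segment (expand a b y c) (runStart y k) (segment y k m).sum =
      runWord a b ((flip a b)^[k] c) (segment y k m) := by
  induction m generalizing k with
  | zero => simp
  | succ m ih =>
      have hrun : segment (expand a b y c) (runStart y k) (y k) =
          List.replicate (y k) ((flip a b)^[k] c) :=
        segment_expand_of_add_le (p := 0) hy (Nat.zero_add _).le
      rw [segment_succ, List.sum_cons, segment_add, hrun, ← runStart_succ, ih, runWord_cons,
        Function.iterate_succ_apply']

end Expand

section Window

/-- The run lengths of a factor of `expand a b y c` that begins inside run `k`: a final part of
run `k`, then the complete runs `k + 1, …, k + m`, then an initial part of run `k + m + 1`. -/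
inductive Window (y : ℕ → ℕ) (k : ℕ) : List ℕ → Prop
  | single {e : ℕ} : 1 ≤ e → e ≤ y k → Window y k [e]
  | cons {e el : ℕ} (m : ℕ) : 1 ≤ e → e ≤ y k → 1 ≤ el → el ≤ y (k + 1 + m) →
      Window y k (e :: (segment y (k + 1) m ++ [el]))

variable {a b c k n B : ℕ} {y : ℕ → ℕ} {es : List ℕ}

lemma Window.one_le_and_le (hw : Window y k es) (hy : ∀ j, 1 ≤ y j ∧ y j ≤ B) :
    ∀ e ∈ es, 1 ≤ e ∧ e ≤ B := by
  have := hy k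
  cases hw with
  | single he₁ he => simp; omega
  | @cons e el m he₁ he hel₁ hel =>
      have := hy (k + 1 + m)
      simp only [List.mem_cons, List.mem_append, List.not_mem_nil, or_false]
      rintro d (rfl | hd | rfl)
      · omega
      · exact forall_mem_segment (P := fun e => 1 ≤ e ∧ e ≤ B) hy d hd
      · omega

lemma Window.segment_expand (hy : ∀ k, 1 ≤ y k) (hw : Window y k es) :
    segment (expand a b y c) (runStart y k + (y k - es.headI)) es.sum =
      runWord a b ((flip a b)^[k] c) es := by
  cases hw with
  | single he₁ he =>
      rw [List.headI_cons, List.sum_singleton, segment_expand_of_add_le hy (by omega)]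
      simp [runWord_cons]
  | @cons e el m he₁ he hel₁ hel =>
      have hstart : runStart y k + (y k - e) + e = runStart y (k + 1) := by
        rw [runStart_succ]; omega
      have hlast : segment (expand a b y c) (runStart y (k + 1 + m)) el =
          List.replicate el ((flip a b)^[k + 1 + m] c) :=
        segment_expand_of_add_le (p := 0) hy ((Nat.zero_add el).le.trans hel)
      rw [runStart_add] at hlast
      have hflip : (flip a b)^[m] (flip a b ((flip a b)^[k] c)) = (flip a b)^[k + 1 + m] c := by
        rw [← Function.iterate_succ_apply' (flip a b), ← Function.iterate_add_apply,
          Nat.add_comm m]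
      rw [List.headI_cons, List.sum_cons, List.sum_append, List.sum_singleton, segment_add,
        segment_add, hstart, segment_expand_of_add_le hy (by omega), Nat.add_zero,
        segment_expand_runStart hy, hlast, runWord_cons, runWord_append, length_segment, hflip,
        Function.iterate_succ_apply']
      simp [runWord_cons]

lemma exists_sum_segment_add (hy : ∀ k, 1 ≤ y k) (hn : 1 ≤ n) (k : ℕ) :
    ∃ m el, n = (segment y k m).sum + el ∧ 1 ≤ el ∧ el ≤ y (k + m) := by
  induction n using Nat.strong_induction_on generalizing k with
  | _ n ih =>
  by_cases hnk : n ≤ y k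
  · exact ⟨0, n, by simp, hn, hnk⟩
  · have := hy k
    obtain ⟨m, el, hsum, hel₁, hel⟩ := ih (n - y k) (by omega) (by omega) (k + 1)
    refine ⟨m + 1, el, ?_, hel₁, by rwa [Nat.add_right_comm, Nat.add_assoc] at hel⟩
    rw [segment_succ, List.sum_cons]
    omega

lemma exists_window_of_segment_expand (hy : ∀ k, 1 ≤ y k) (hn : 1 ≤ n) (i : ℕ) :
    ∃ k es, Window y k es ∧
      segment (expand a b y c) i n = runWord a b ((flip a b)^[k] c) es := by
  obtain ⟨h₁, h₂⟩ := runIndex_spec hy i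
  set k := runIndex y i
  obtain ⟨p, hp⟩ := Nat.exists_eq_add_of_le h₁
  rw [hp]
  rw [hp, runStart_succ] at h₂
  by_cases hpn : p + n ≤ y k
  · refine ⟨k, [n], .single hn (by omega), ?_⟩
    rw [segment_expand_of_add_le hy hpn]
    simp [runWord_cons]
  · obtain ⟨m, el, hsum, hel₁, hel⟩ :=
      exists_sum_segment_add hy (n := n - (y k - p)) (by omega) (k + 1)
    have hw := Window.cons m (by omega) (Nat.sub_le (y k) p) hel₁ hel
    refine ⟨k, _, hw, ?_⟩
    convert hw.segment_expand (c := c) hy using 2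
    · simp only [List.headI_cons]; omega
    · simp only [List.sum_cons, List.sum_append, List.sum_nil]; omega

end Window

section WindowDerivative

variable {a b c k j n p : ℕ} {y : ℕ → ℕ} {es u : List ℕ}

lemma segment_append_cut (hy : ∀ k, y k = a ∨ y k = b) (hp : p ≤ y (j + n)) :
    segment y j n ++ cut a b p = segment y j (n + (cut a b p).length) := by
  by_cases hpa : p ≤ a
  · simp [cut_of_le hpa]
  · have hb : y (j + n) = b := by have := hy (j + n); omega
    rw [cut_of_lt (not_le.1 hpa), segment_add, List.length_singleton, segment_one, hb]

lemma cut_append_segment (hy : ∀ k, y k = a ∨ y k = b) (hp : p ≤ y k) :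
    cut a b p ++ segment y (k + 1) n =
      segment y (k + 1 - (cut a b p).length) ((cut a b p).length + n) := by
  by_cases hpa : p ≤ a
  · simp [cut_of_le hpa]
  · have hb : y k = b := by have := hy k; omega
    rw [cut_of_lt (not_le.1 hpa), List.length_singleton, Nat.add_sub_cancel, Nat.add_comm 1,
      segment_succ, hb]
    rfl

lemma exps_runWord_of_window (ha : 1 ≤ a) (hab : a < b) (hy : ∀ k, y k = a ∨ y k = b)
    (hc : c = a ∨ c = b) (hw : Window y k es) : exps (runWord a b c es) = es :=
  exps_runWord hab.ne hc fun e he =>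
    (hw.one_le_and_le (B := b) (fun j => by have := hy j; omega) e he).1

lemma cf1_runWord_of_window (ha : 1 ≤ a) (hab : a < b) (hy : ∀ k, y k = a ∨ y k = b)
    (hc : c = a ∨ c = b) (hw : Window y k es) : Cf1 a b (runWord a b c es) := by
  rw [Cf1, exps_runWord_of_window ha hab hy hc hw]
  refine ⟨fun d hd => eq_or_of_mem_runWord hc hd,
    fun e he => (hw.one_le_and_le (B := b) (fun j => by have := hy j; omega) e he).2, ?_⟩
  cases hw with
  | single => simp
  | cons m => simpa using forall_mem_segment (i := k + 1) (n := m) hy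

lemma factorOf_Df_runWord_of_window (ha : 1 ≤ a) (hab : a < b) (hy : ∀ k, y k = a ∨ y k = b)
    (hc : c = a ∨ c = b) (hw : Window y k es) : FactorOf (Df a b (runWord a b c es)) y := by
  have hexps := exps_runWord_of_window ha hab hy hc hw
  cases hw with
  | single _ he =>
      have h := cut_append_segment (a := a) (b := b) (n := 0) hy he
      rw [segment_zero, List.append_nil] at h
      rw [Df_of_exps_eq_singleton hexps, h]
      exact factorOf_segment
  | @cons e _ m _ he _ hel =>
      rw [Df_of_exps_eq_cons_append hexps, cut_append_segment hy he, segment_append_cut hy]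
      · exact factorOf_segment
      · convert hel using 2
        have := length_cut_le_one (a := a) (b := b) (p := e)
        omega

lemma le_of_cut_eq_segment (hy : ∀ k, y k = a ∨ y k = b) (hpb : p ≤ b) {i n : ℕ}
    (h : cut a b p = segment y i n) (hk : a < p → k = i) : p ≤ y k := by
  by_cases hpa : p ≤ a
  · have := hy k; omega
  · rw [cut_of_lt (not_le.1 hpa)] at h
    obtain rfl : n = 1 := by simpa using (congrArg List.length h).symm
    rw [segment_one, List.singleton_inj] at h
    rw [hk (not_le.1 hpa)]
    omega

lemma exists_window_of_Df_eq_segment (hy : ∀ k, y k = a ∨ y k = b) (hj : 1 ≤ j)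
    (hu : u ≠ []) (hb : ∀ e ∈ exps u, e ≤ b)
    (hD : Df a b u = segment y j (Df a b u).length) :
    ∃ k, j - 1 ≤ k ∧ Window y k (exps u) := by
  obtain ⟨e, rest, hes⟩ := List.exists_cons_of_ne_nil (exps_ne_nil hu)
  have hpos : ∀ p ∈ exps u, 1 ≤ p := fun p => one_le_of_mem_exps
  rw [hes] at hb hpos ⊢
  rcases List.eq_nil_or_concat' rest with rfl | ⟨mid, el, rfl⟩
  · rw [Df_of_exps_eq_singleton hes] at hD
    exact ⟨j, Nat.sub_le j 1,
      .single (hpos e (by simp)) (le_of_cut_eq_segment hy (hb e (by simp)) hD fun _ => rfl)⟩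
  · rw [Df_of_exps_eq_cons_append hes, List.length_append, List.length_append, segment_add,
      segment_add] at hD
    obtain ⟨hcut, hmid⟩ := List.append_inj (List.append_inj hD (by simp)).1 (by simp)
    have hcutl := (List.append_inj hD (by simp)).2
    set ℓ := (cut a b e).length with hℓ
    have hℓ₁ : ℓ ≤ 1 := length_cut_le_one
    have hk : j + ℓ = j + ℓ - 1 + 1 := by omega
    refine ⟨j + ℓ - 1, by omega, ?_⟩
    rw [hmid, hk]
    refine .cons _ (hpos e (by simp)) (le_of_cut_eq_segment hy (hb e (by simp)) hcut fun h => ?_)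
      (hpos el (by simp)) (le_of_cut_eq_segment hy (hb el (by simp)) hcutl fun _ => by omega)
    simp [hℓ, cut_of_lt h]

end WindowDerivative

section Kolakoski

def kolPrefix (a b m : ℕ) : List ℕ := (runWord a b b)^[m] [b]

/-- The generalized Kolakoski word over `{a, b}` starting with `b`, the limit of the increasing
prefixes `kolPrefix a b m`. -/
def kol (a b n : ℕ) : ℕ := (kolPrefix a b (n + 1)).getD n 0

variable {a b m m' n : ℕ}

lemma kolPrefix_succ (m : ℕ) : kolPrefix a b (m + 1) = runWord a b b (kolPrefix a b m) :=
  Function.iterate_succ_apply' _ _ _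

lemma eq_or_of_mem_kolPrefix {d : ℕ} (hd : d ∈ kolPrefix a b m) : d = a ∨ d = b := by
  cases m with
  | zero => exact Or.inr (List.mem_singleton.1 hd)
  | succ m => rw [kolPrefix_succ] at hd; exact eq_or_of_mem_runWord (Or.inr rfl) hd

lemma kolPrefix_prefix_succ (hb : 1 ≤ b) (m : ℕ) :
    kolPrefix a b m <+: kolPrefix a b (m + 1) := by
  induction m with
  | zero =>
      refine ⟨List.replicate (b - 1) b, ?_⟩
      rw [kolPrefix_succ, kolPrefix, Function.iterate_zero_apply, runWord_cons, runWord_nil,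
        List.append_nil, List.singleton_append, ← List.replicate_succ, Nat.sub_add_cancel hb]
  | succ m ih =>
      obtain ⟨t, ht⟩ := ih
      rw [kolPrefix_succ, kolPrefix_succ (m + 1), ← ht, runWord_append]
      exact List.prefix_append _ _

lemma kolPrefix_prefix (hb : 1 ≤ b) (h : m ≤ m') : kolPrefix a b m <+: kolPrefix a b m' := by
  induction m', h using Nat.le_induction with
  | base => exact List.prefix_refl _
  | succ m' _ ih => exact ih.trans (kolPrefix_prefix_succ hb m')

lemma length_kolPrefix (ha : 1 ≤ a) (hab : a < b) (m : ℕ) :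
    m + 1 ≤ (kolPrefix a b m).length := by
  induction m with
  | zero => simp [kolPrefix]
  | succ m ih =>
      obtain ⟨t, ht⟩ := kolPrefix_prefix (a := a) (b := b) (by omega) (Nat.zero_le m)
      have ht₁ : t.length ≤ t.sum := t.length_le_sum_of_one_le fun e he =>
        one_le_of_eq_or ha hab.le (eq_or_of_mem_kolPrefix (m := m) (by rw [← ht]; simp [he]))
      rw [kolPrefix_succ, length_runWord, ← ht]
      rw [← ht] at ih
      simp only [kolPrefix, Function.iterate_zero_apply, List.singleton_append, List.length_cons,
        List.sum_cons] at ih ⊢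
      omega

lemma kol_eq_getElem (ha : 1 ≤ a) (hab : a < b) (hn : n < (kolPrefix a b m).length) :
    kol a b n = (kolPrefix a b m)[n] := by
  have hn' : n < (kolPrefix a b (n + 1)).length :=
    (length_kolPrefix ha hab (n + 1)).trans' (by omega)
  rw [kol, List.getD_eq_getElem _ _ hn']
  rcases le_total m (n + 1) with h | h
  · exact ((kolPrefix_prefix (by omega) h).getElem hn).symm
  · exact (kolPrefix_prefix (by omega) h).getElem hn'

lemma kol_eq_or (ha : 1 ≤ a) (hab : a < b) (n : ℕ) : kol a b n = a ∨ kol a b n = b := by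
  have hn : n < (kolPrefix a b n).length := length_kolPrefix ha hab n
  rw [kol_eq_getElem ha hab hn]
  exact eq_or_of_mem_kolPrefix (List.getElem_mem hn)

lemma segment_kol (ha : 1 ≤ a) (hab : a < b) (m : ℕ) :
    segment (kol a b) 0 (kolPrefix a b m).length = kolPrefix a b m :=
  List.ext_getElem (length_segment) fun n _ hn => by
    simpa [segment] using kol_eq_getElem ha hab hn

lemma kol_eq_expand (ha : 1 ≤ a) (hab : a < b) : kol a b = expand a b (kol a b) b := by
  funext i
  have hy : ∀ k, 1 ≤ kol a b k := fun k => one_le_of_eq_or ha hab.le (kol_eq_or ha hab k)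
  have h := segment_expand_runStart (a := a) (b := b) (c := b) hy 0 (kolPrefix a b i).length
  rw [segment_kol ha hab, ← length_runWord (a := a) (b := b) (c := b),
    Function.iterate_zero_apply, ← kolPrefix_succ] at h
  conv_rhs at h => rw [← segment_kol ha hab (i + 1)]
  have hi : i < (kolPrefix a b (i + 1)).length :=
    (length_kolPrefix ha hab (i + 1)).trans' (by omega)
  simpa [segment, hi, runStart] using (congrArg (·[i]?) h).symm

lemma smooth_kol (ha : 1 ≤ a) (hab : a < b) : Smooth a b (kol a b) := by
  have hd : DerivesTo a b (kol a b) (kol a b) := by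
    have := derivesTo_expand (c := b) (kol_eq_or ha hab) fun k =>
      one_le_of_eq_or ha hab.le (kol_eq_or ha hab k)
    rwa [← kol_eq_expand ha hab] at this
  exact ⟨kol_eq_or ha hab, fun _ => kol a b, rfl, fun _ => hd⟩

end Kolakoski

section Main

variable {a b : ℕ}

theorem fsmooth_of_factorOf (ha : 1 ≤ a) (hab : a < b) {u : List ℕ} {x : ℕ → ℕ}
    (hx : Smooth a b x) (hu : FactorOf u x) : FSmooth a b u := by
  induction hn : u.length using Nat.strong_induction_on generalizing u x with
  | _ n ih =>
  rcases eq_or_ne u [] with rfl | hne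
  · exact fsmooth_nil
  obtain ⟨y, hy, hxy⟩ := hx.exists_derivative ha hab.le
  have hy₁ k : 1 ≤ y k := one_le_of_eq_or ha hab.le (hy.1 k)
  obtain ⟨i, hi⟩ := hu
  obtain ⟨k, es, hw, hes⟩ := exists_window_of_segment_expand (c := x 0) hy₁
    (List.length_pos_iff.2 hne) i
  have hc := iterate_flip_eq_or (hx.1 0) k
  rw [← hxy] at hes
  obtain rfl : u = runWord a b ((flip a b)^[k] (x 0)) es := hi.trans hes
  exact fsmooth_iff.2 ⟨cf1_runWord_of_window ha hab hy.1 hc hw,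
    ih _ (hn ▸ length_Df_lt ha hne) hy (factorOf_Df_runWord_of_window ha hab hy.1 hc hw) rfl⟩

/- `N` is what makes the induction go through: the first run of `u` may be the end of the run of
`y` just before the occurrence of `D_f u`. -/
theorem exists_factor_of_fsmooth (ha : 1 ≤ a) (hab : a < b) {u : List ℕ} (hu : FSmooth a b u)
    (N : ℕ) : ∃ x, Smooth a b x ∧ ∃ i, N ≤ i ∧ u = segment x i u.length := by
  induction hn : u.length using Nat.strong_induction_on generalizing u N with
  | _ n ih =>
  rcases u with _ | ⟨c, t⟩
  · exact ⟨kol a b, smooth_kol ha hab, N, le_rfl, by simp [← hn]⟩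
  obtain ⟨hcf, hD⟩ := fsmooth_iff.1 hu
  obtain ⟨y, hy, j, hj, hyj⟩ :=
    ih _ (hn ▸ length_Df_lt ha (List.cons_ne_nil c t)) hD (N + 1) rfl
  obtain ⟨k, hk, hw⟩ := exists_window_of_Df_eq_segment hy.1 (by omega) (List.cons_ne_nil c t)
    hcf.2.1 hyj
  have hy₁ k : 1 ≤ y k := one_le_of_eq_or ha hab.le (hy.1 k)
  have hc : c = a ∨ c = b := hcf.1 c (List.mem_cons_self ..)
  refine ⟨expand a b y ((flip a b)^[k] c), smooth_expand ha hab.le (iterate_flip_eq_or hc k) hy,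
    runStart y k + (y k - (exps (c :: t)).headI), ?_, ?_⟩
  · have := le_runStart hy₁ k
    omega
  · rw [← hn, ← sum_exps, hw.segment_expand hy₁, iterate_flip_iterate_flip hab.ne hc]
    exact eq_runWord_exps hab.ne hcf.1

end Main

theorem stmt13 (a b : ℕ) (ha : 1 ≤ a) (hab : a < b) :
    {u : List ℕ | ∃ x, Smooth a b x ∧ FactorOf u x} = {u | FSmooth a b u} ∧
    ∀ n, Set.ncard {u : List ℕ | (∃ x, Smooth a b x ∧ FactorOf u x) ∧ u.length = n}
        = Set.ncard {u : List ℕ | FSmooth a b u ∧ u.length = n} := by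
  have hL (u : List ℕ) : (∃ x, Smooth a b x ∧ FactorOf u x) ↔ FSmooth a b u :=
    ⟨fun ⟨_, hx, hu⟩ => fsmooth_of_factorOf ha hab hx hu, fun hu =>
      let ⟨x, hx, i, _, hi⟩ := exists_factor_of_fsmooth ha hab hu 0
      ⟨x, hx, i, hi⟩⟩
  simp only [hL, implies_true, and_self]

end SmoothWords
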